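/- For every natural number d, the diagonal function g_d : ℕ → ℕ defined by g_d(n) = f_d(n,n) is primitive recursive. -/
import Mathlib


/-- The family of functions `f d n m` defined by:
`f 0 n m = m`, `f (d+1) 0 m = m`,
`f (d+1) (n+1) m = 1 + f (d+1) n m + f d ((2m+1) * f (d+1) n m) ((2m+1) * f (d+1) n m)`. -/
def f : ℕ → ℕ → ℕ → ℕ
  | 0, _, m => m
  | _ + 1, 0, m => m
  | d + 1, n + 1, m =>
      1 + f (d + 1) n m + f d ((2 * m + 1) * f (d + 1) n m) ((2 * m + 1) * f (d + 1) n m)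
  termination_by d n _ => (d, n)

lemma f_primrec : ∀ d, Primrec (fun p : ℕ × ℕ => f d p.1 p.2) := by
  intro d
  induction d with
  | zero =>
    have : (fun p : ℕ × ℕ => f 0 p.1 p.2) = fun p => p.2 := by
      funext p; simp [f]
    rw [this]; exact Primrec.snd
  | succ d ih =>
    have hdiag : Primrec (fun k : ℕ => f d k k) :=
      ih.comp (Primrec.id.pair Primrec.id)
    have hstep : Primrec₂ (fun (p : ℕ × ℕ) (q : ℕ × ℕ) =>
        1 + q.2 + f d ((2 * p.2 + 1) * q.2) ((2 * p.2 + 1) * q.2)) := by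
      have h1 : Primrec (fun x : (ℕ × ℕ) × (ℕ × ℕ) => (2 * x.1.2 + 1) * x.2.2) := by
        apply Primrec.nat_mul.comp
        · exact Primrec.nat_add.comp
            (Primrec.nat_mul.comp (Primrec.const 2) (Primrec.snd.comp Primrec.fst))
            (Primrec.const 1)
        · exact Primrec.snd.comp Primrec.snd
      exact Primrec.nat_add.comp
        (Primrec.nat_add.comp (Primrec.const 1) (Primrec.snd.comp Primrec.snd))
        (hdiag.comp h1)
    have hrec := Primrec.nat_rec' (f := fun p : ℕ × ℕ => p.1) (g := fun p : ℕ × ℕ => p.2)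
      (h := fun (p : ℕ × ℕ) (q : ℕ × ℕ) =>
        1 + q.2 + f d ((2 * p.2 + 1) * q.2) ((2 * p.2 + 1) * q.2))
      Primrec.fst Primrec.snd hstep
    have : (fun p : ℕ × ℕ => f (d + 1) p.1 p.2) =
        fun p : ℕ × ℕ => Nat.rec (motive := fun _ => ℕ) p.2
          (fun _ IH => 1 + IH + f d ((2 * p.2 + 1) * IH) ((2 * p.2 + 1) * IH)) p.1 := by
      funext p
      obtain ⟨n, m⟩ := p
      induction n with
      | zero => simp [f]
      | succ n ihn => simp [f, ihn]
    rw [this]; exact hrec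

theorem g_primrec (d : ℕ) : Nat.Primrec (fun n => f d n n) := by
  have := (f_primrec d).comp (Primrec.id.pair Primrec.id)
  exact Primrec.nat_iff.mp this
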